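/- arXiv:2208.05903 — 4 statements merged into one kernel-verified Lean document; each statement's English description precedes it below -/
import Mathlib

section
/- Let p be an odd prime, k ≥ 1 an odd integer, and D > 0 a nonsquare integer which is a nonzero square modulo p. For each integer n ≥ 0 let S_n be the set of triples Q = [A,B,C] ∈ ℤ³ with B² − 4AC = D·p^{2n}, AC < 0, and not all of A, B, C divisible by p. Then: (i) each S_n is a finite set; (ii) for every integer h ≥ 0 and every z ∈ H_p^{≤h} and every Q ∈ ⋃_n S_n one has Q(z,1) ≠ 0; and (iii) for every h ≥ 0 the sequence of partial sums F_N(z) = Σ_{n=0}^{N} p^{nk} Σ_{Q∈S_n} sgn(A)·Q(z,1)^{−k} converges uniformly on H_p^{≤h} as N → ∞ (with respect to the sup norm of |·| on H_p^{≤h}). -/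
/-!
Since `D` is a nonzero square modulo the odd prime `p`, Hensel's lemma gives `√D ∈ ℚ_p`, so every
`Q = [A,B,C] ∈ S_n` factors as `A (z - r₁) (z - r₂)` with `r₁, r₂ ∈ ℚ_p`. For `z ∈ H_p^{≤h}` one
has `|z - r| ≥ p^{-2h} max(1, |r|)`, while primitivity of `Q` and Gauss's lemma give
`|A| max(1, |r₁|) max(1, |r₂|) ≥ max(|A|, |B|, |C|) = 1`; hence `|Q(z,1)| ≥ p^{-4h}` on `H_p^{≤h}`.
As `ℂ_p` is ultrametric, the `n`-th term of the series is then bounded by `p^{4hk} p^{-nk}`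
uniformly on `H_p^{≤h}`, and the Weierstrass M-test applies.
-/

open Filter

/-- The affinoid subdomain `H_p^{≤n}` of the `p`-adic upper half-plane:
the set of `z ∈ ℂ_p` with `‖z‖ ≤ p^n` and `‖z − t‖ ≥ p^(−n)` for every `t ∈ ℚ_p`.
Here `ℂ_p` is modelled by a normed field `K` with a `ℚ_[p]`-algebra structure. -/
def affinoid (p : ℕ) [Fact p.Prime] (K : Type*) [NormedField K] [Algebra ℚ_[p] K]
    (n : ℕ) : Set K :=
  {z | ‖z‖ ≤ (p : ℝ) ^ n ∧ ∀ t : ℚ_[p], ((p : ℝ) ^ n)⁻¹ ≤ ‖z - algebraMap ℚ_[p] K t‖}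

/-- The set `S_n` of simple forms: triples `Q = [A,B,C] ∈ ℤ³` with
`B² − 4AC = D·p^(2n)`, `AC < 0`, and not all of `A, B, C` divisible by `p`. -/
def quadSet (p : ℕ) (D : ℤ) (n : ℕ) : Set (ℤ × ℤ × ℤ) :=
  {Q | Q.2.1 ^ 2 - 4 * Q.1 * Q.2.2 = D * (p : ℤ) ^ (2 * n) ∧ Q.1 * Q.2.2 < 0 ∧
    ¬ ((p : ℤ) ∣ Q.1 ∧ (p : ℤ) ∣ Q.2.1 ∧ (p : ℤ) ∣ Q.2.2)}

lemma abs_le_of_mem_quadSet {p : ℕ} {D : ℤ} {n : ℕ} {Q : ℤ × ℤ × ℤ} (hQ : Q ∈ quadSet p D n) :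
    |Q.1| ≤ D * p ^ (2 * n) ∧ |Q.2.1| ≤ D * p ^ (2 * n) := by
  obtain ⟨A, B, C⟩ := Q
  obtain ⟨hdisc, hAC, -⟩ := hQ
  have hC : 1 ≤ |C| := Int.one_le_abs (right_ne_zero_of_mul hAC.ne)
  have hAC' : |A| * |C| = -(A * C) := by rw [← abs_mul, abs_of_neg hAC]
  have hB : |B| ≤ B ^ 2 := sq_abs B ▸ Int.le_self_sq |B|
  constructor <;> nlinarith [abs_nonneg A, sq_nonneg B]

lemma quadSet_injOn (p : ℕ) (D : ℤ) (n : ℕ) :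
    Set.InjOn (fun Q : ℤ × ℤ × ℤ => (Q.1, Q.2.1)) (quadSet p D n) := by
  rintro ⟨A, B, C⟩ ⟨hdisc, hAC, -⟩ ⟨A', B', C'⟩ ⟨hdisc', -, -⟩ hAB
  obtain ⟨rfl, rfl⟩ := Prod.mk.inj hAB
  have hA : 4 * A ≠ 0 := mul_ne_zero four_ne_zero (left_ne_zero_of_mul hAC.ne)
  have hC : C = C' := mul_left_cancel₀ hA (by linarith)
  rw [hC]

lemma quadSet_finite (p : ℕ) (D : ℤ) (n : ℕ) : (quadSet p D n).Finite := by
  set E : ℤ := D * p ^ (2 * n)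
  refine Set.Finite.of_finite_image ?_ (quadSet_injOn p D n)
  refine ((Set.finite_Icc (-E) E).prod (Set.finite_Icc (-E) E)).subset ?_
  rintro _ ⟨Q, hQ, rfl⟩
  obtain ⟨hA, hB⟩ := abs_le_of_mem_quadSet hQ
  exact ⟨abs_le.mp hA, abs_le.mp hB⟩

theorem PadicInt.exists_sq_eq_intCast {p : ℕ} [Fact p.Prime] (hp : p ≠ 2) {D : ℤ}
    (hD : IsSquare (D : ZMod p)) (hD0 : (D : ZMod p) ≠ 0) : ∃ s : ℤ_[p], s ^ 2 = D := by
  obtain ⟨r, hr⟩ := hD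
  have hr0 : r ≠ 0 := by rintro rfl; exact hD0 (by rw [hr, mul_zero])
  have h2 : (2 : ZMod p) ≠ 0 := by
    rw [← Nat.cast_ofNat, ne_eq, ZMod.natCast_eq_zero_iff,
      Nat.prime_dvd_prime_iff_eq Fact.out Nat.prime_two]
    exact hp
  set x : ℤ := (r.val : ℤ)
  have hx : (x : ZMod p) = r := by simp [x]
  let F : Polynomial ℤ := .X ^ 2 - .C D
  have hF : ∀ y : ℤ_[p], F.aeval y = y ^ 2 - D := fun y => by simp [F]
  have hF' : ∀ y : ℤ_[p], F.derivative.aeval y = 2 * y := fun y => by simp [F, map_ofNat]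
  have hval : ‖F.aeval (x : ℤ_[p])‖ < 1 := by
    rw [hF, show (x : ℤ_[p]) ^ 2 - D = ((x ^ 2 - D : ℤ) : ℤ_[p]) by push_cast; ring,
      PadicInt.norm_intCast_lt_one_iff, ← ZMod.intCast_zmod_eq_zero_iff_dvd]
    push_cast
    rw [hx, hr, sq, sub_self]
  have hder : ‖F.derivative.aeval (x : ℤ_[p])‖ = 1 := by
    refine le_antisymm (PadicInt.norm_le_one _) (not_lt.mp ?_)
    rw [hF', show (2 : ℤ_[p]) * x = ((2 * x : ℤ) : ℤ_[p]) by push_cast; ring,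
      PadicInt.norm_intCast_lt_one_iff, ← ZMod.intCast_zmod_eq_zero_iff_dvd]
    push_cast
    rw [hx]
    exact mul_ne_zero h2 hr0
  obtain ⟨s, hs, -⟩ := hensels_lemma (F := F) (a := x) (by rwa [hder, one_pow])
  exact ⟨s, sub_eq_zero.mp (by rw [← hF]; exact hs)⟩

lemma exists_vieta_of_discrim_eq_sq {F : Type*} [Field F] [NeZero (2 : F)] {a b c t : F}
    (ha : a ≠ 0) (ht : discrim a b c = t ^ 2) :
    ∃ r₁ r₂ : F, a * (r₁ + r₂) = -b ∧ a * (r₁ * r₂) = c := by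
  refine ⟨(-b + t) / (2 * a), (-b - t) / (2 * a), by field_simp; ring, ?_⟩
  rw [discrim] at ht
  field_simp
  linear_combination ht

lemma norm_le_mul_max_one_mul_max_one {F : Type*} [NormedField F] [IsUltrametricDist F]
    (a r₁ r₂ : F) :
    max ‖a‖ (max ‖a * (r₁ + r₂)‖ ‖a * (r₁ * r₂)‖) ≤ ‖a‖ * (max 1 ‖r₁‖ * max 1 ‖r₂‖) := by
  have h₁ : 1 ≤ max 1 ‖r₁‖ := le_max_left _ _
  have h₂ : 1 ≤ max 1 ‖r₂‖ := le_max_left _ _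
  rw [norm_mul, norm_mul, ← mul_max_of_nonneg _ _ (norm_nonneg a)]
  refine max_le (le_mul_of_one_le_right (norm_nonneg a) (one_le_mul_of_one_le_of_one_le h₁ h₂))
    (mul_le_mul_of_nonneg_left (max_le ?_ ?_) (norm_nonneg a))
  · refine (IsUltrametricDist.norm_add_le_max r₁ r₂).trans (max_le ?_ ?_)
    · exact (le_max_right 1 _).trans (le_mul_of_one_le_right (by positivity) h₂)
    · exact (le_max_right 1 _).trans (le_mul_of_one_le_left (by positivity) h₁)
  · rw [norm_mul]
    exact mul_le_mul (le_max_right _ _) (le_max_right _ _) (norm_nonneg _) (by positivity)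

lemma one_le_max_norm_intCast {p : ℕ} [Fact p.Prime] {A B C : ℤ}
    (h : ¬ ((p : ℤ) ∣ A ∧ (p : ℤ) ∣ B ∧ (p : ℤ) ∣ C)) :
    1 ≤ max ‖(A : ℚ_[p])‖ (max ‖(B : ℚ_[p])‖ ‖(C : ℚ_[p])‖) := by
  by_contra! hlt
  simp only [max_lt_iff, Padic.norm_intCast_lt_one_iff] at hlt
  exact h hlt

section Affinoid

variable {p : ℕ} [Fact p.Prime] {K : Type*} [NormedField K] [Algebra ℚ_[p] K]

def quadEval (Q : ℤ × ℤ × ℤ) (z : K) : K := Q.1 * z ^ 2 + Q.2.1 * z + Q.2.2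

variable (p K) in
noncomputable def seriesTerm (D : ℤ) (k n : ℕ) (z : K) : K :=
  (p : K) ^ (n * k) * ∑' Q : quadSet p D n, ((Q.1.1.sign : ℤ) : K) * quadEval Q.1 z ^ (-(k : ℤ))

lemma norm_intCast_eq_padicNorm (hK : ∀ x : ℚ_[p], ‖algebraMap ℚ_[p] K x‖ = ‖x‖) (m : ℤ) :
    ‖(m : K)‖ = ‖(m : ℚ_[p])‖ := by
  rw [← map_intCast (algebraMap ℚ_[p] K), hK]

lemma isUltrametricDist_of_norm_algebraMap (hK : ∀ x : ℚ_[p], ‖algebraMap ℚ_[p] K x‖ = ‖x‖) :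
    IsUltrametricDist K :=
  IsUltrametricDist.isUltrametricDist_of_forall_norm_natCast_le_one fun m => by
    rw [← map_natCast (algebraMap ℚ_[p] K), hK]
    exact_mod_cast Padic.norm_int_le_one m

variable [IsUltrametricDist K]

lemma inv_pow_mul_max_one_le_norm_sub (hK : ∀ x : ℚ_[p], ‖algebraMap ℚ_[p] K x‖ = ‖x‖)
    {h : ℕ} {z : K} (hz : z ∈ affinoid p K h) (r : ℚ_[p]) :
    ((p : ℝ) ^ (2 * h))⁻¹ * max 1 ‖r‖ ≤ ‖z - algebraMap ℚ_[p] K r‖ := by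
  obtain ⟨hz_norm, hz_dist⟩ := hz
  have hp : (1 : ℝ) ≤ p := by exact_mod_cast (Fact.out : p.Prime).one_lt.le
  have hph : (1 : ℝ) ≤ p ^ h := one_le_pow₀ hp
  rcases le_or_gt ‖r‖ (p ^ h) with hr | hr
  · calc ((p : ℝ) ^ (2 * h))⁻¹ * max 1 ‖r‖ ≤ ((p : ℝ) ^ (2 * h))⁻¹ * p ^ h := by
          gcongr; exact max_le hph hr
      _ = ((p : ℝ) ^ h)⁻¹ := by rw [two_mul, pow_add]; field_simp
      _ ≤ ‖z - algebraMap ℚ_[p] K r‖ := hz_dist r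
  · have hzr : ‖z‖ < ‖-algebraMap ℚ_[p] K r‖ := by rw [norm_neg, hK]; exact hz_norm.trans_lt hr
    rw [sub_eq_add_neg, IsUltrametricDist.norm_add_eq_max_of_norm_ne_norm hzr.ne,
      max_eq_right hzr.le, norm_neg, hK, max_eq_right (hph.trans hr.le)]
    exact mul_le_of_le_one_left (norm_nonneg r) (inv_le_one_of_one_le₀ (one_le_pow₀ hp))

theorem inv_pow_le_norm_quadEval (hK : ∀ x : ℚ_[p], ‖algebraMap ℚ_[p] K x‖ = ‖x‖)
    {D : ℤ} {s : ℚ_[p]} (hs : s ^ 2 = D) {h : ℕ} {z : K}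
    (hz : z ∈ affinoid p K h) {n : ℕ} {Q : ℤ × ℤ × ℤ} (hQ : Q ∈ quadSet p D n) :
    ((p : ℝ) ^ (4 * h))⁻¹ ≤ ‖quadEval Q z‖ := by
  obtain ⟨A, B, C⟩ := Q
  obtain ⟨hdisc, hAC, hprim⟩ := hQ
  simp only at hdisc hAC hprim
  have hA : (A : ℚ_[p]) ≠ 0 := Int.cast_ne_zero.mpr (left_ne_zero_of_mul hAC.ne)
  have hdisc' : discrim (A : ℚ_[p]) B C = ((p : ℚ_[p]) ^ n * s) ^ 2 := by
    have hdisc_cast := congrArg (Int.cast : ℤ → ℚ_[p]) hdisc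
    push_cast at hdisc_cast
    rw [discrim, mul_pow, ← pow_mul, hs]
    linear_combination hdisc_cast
  obtain ⟨r₁, r₂, hsum, hprod⟩ := exists_vieta_of_discrim_eq_sq hA hdisc'
  have hfactor : quadEval (A, B, C) z =
      A * ((z - algebraMap ℚ_[p] K r₁) * (z - algebraMap ℚ_[p] K r₂)) := by
    have e₁ := congrArg (algebraMap ℚ_[p] K) hsum
    have e₂ := congrArg (algebraMap ℚ_[p] K) hprod
    simp only [map_mul, map_add, map_neg, map_intCast] at e₁ e₂
    simp only [quadEval]
    linear_combination z * e₁ - e₂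
  have hgauss : 1 ≤ ‖(A : ℚ_[p])‖ * (max 1 ‖r₁‖ * max 1 ‖r₂‖) := by
    have := norm_le_mul_max_one_mul_max_one (A : ℚ_[p]) r₁ r₂
    rw [hsum, hprod, norm_neg] at this
    exact (one_le_max_norm_intCast hprim).trans this
  set q : ℝ := ((p : ℝ) ^ (2 * h))⁻¹
  calc ((p : ℝ) ^ (4 * h))⁻¹
      ≤ ((p : ℝ) ^ (4 * h))⁻¹ * (‖(A : ℚ_[p])‖ * (max 1 ‖r₁‖ * max 1 ‖r₂‖)) :=
        le_mul_of_one_le_right (by positivity) hgauss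
    _ = ‖(A : ℚ_[p])‖ * ((q * max 1 ‖r₁‖) * (q * max 1 ‖r₂‖)) := by
        rw [show 4 * h = 2 * h + 2 * h by ring, pow_add, mul_inv]; ring
    _ ≤ ‖(A : ℚ_[p])‖ * (‖z - algebraMap ℚ_[p] K r₁‖ * ‖z - algebraMap ℚ_[p] K r₂‖) := by
        gcongr <;> exact inv_pow_mul_max_one_le_norm_sub hK hz _
    _ = ‖quadEval (A, B, C) z‖ := by
        rw [hfactor, norm_mul, norm_mul, norm_intCast_eq_padicNorm hK]

lemma norm_seriesTerm_le (hK : ∀ x : ℚ_[p], ‖algebraMap ℚ_[p] K x‖ = ‖x‖)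
    {D : ℤ} {s : ℚ_[p]} (hs : s ^ 2 = D) {h : ℕ} {z : K}
    (hz : z ∈ affinoid p K h) (k n : ℕ) :
    ‖seriesTerm p K D k n z‖ ≤ (p : ℝ) ^ (4 * h * k) * ((p : ℝ) ^ k)⁻¹ ^ n := by
  have hsum : ‖∑' Q : quadSet p D n, ((Q.1.1.sign : ℤ) : K) * quadEval Q.1 z ^ (-(k : ℤ))‖ ≤
      (p : ℝ) ^ (4 * h * k) := by
    refine IsUltrametricDist.norm_tsum_le_of_forall_le_of_nonneg (by positivity) fun Q => ?_
    have hlow := inv_pow_le_norm_quadEval hK hs hz Q.2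
    have : 0 < p := (Fact.out : p.Prime).pos
    rw [norm_mul, norm_intCast_eq_padicNorm hK, norm_zpow, zpow_neg, zpow_natCast, pow_mul]
    refine (mul_le_of_le_one_left (by positivity) (Padic.norm_int_le_one _)).trans ?_
    calc (‖quadEval Q.1 z‖ ^ k)⁻¹ ≤ ((((p : ℝ) ^ (4 * h))⁻¹) ^ k)⁻¹ :=
          inv_anti₀ (by positivity) (pow_le_pow_left₀ (by positivity) hlow k)
      _ = ((p : ℝ) ^ (4 * h)) ^ k := by rw [inv_pow, inv_inv]
  have hp : ‖(p : K)‖ = (p : ℝ)⁻¹ := by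
    rw [← map_natCast (algebraMap ℚ_[p] K), hK, Padic.norm_p]
  rw [seriesTerm, norm_mul, norm_pow, hp, mul_comm n k, pow_mul, inv_pow, mul_comm]
  exact mul_le_mul_of_nonneg_right hsum (by positivity)

end Affinoid

theorem tendstoUniformlyOn_sum_range_succ_of_norm_le_geometric {β F : Type*}
    [NormedAddCommGroup F] [CompleteSpace F] {f : ℕ → β → F} {s : Set β} {C r : ℝ}
    (hr₀ : 0 ≤ r) (hr₁ : r < 1) (hf : ∀ n, ∀ x ∈ s, ‖f n x‖ ≤ C * r ^ n) :
    TendstoUniformlyOn (fun N x => ∑ n ∈ Finset.range (N + 1), f n x) (fun x => ∑' n, f n x)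
      atTop s :=
  fun u hu => (tendsto_add_atTop_nat 1).eventually
    (tendstoUniformlyOn_tsum_nat ((summable_geometric_of_lt_one hr₀ hr₁).mul_left C) hf u hu)

theorem stmt1_general (p : ℕ) [Fact p.Prime] (hp : p ≠ 2)
    (K : Type*) [NormedField K] [Algebra ℚ_[p] K] [CompleteSpace K]
    (hK : ∀ x : ℚ_[p], ‖algebraMap ℚ_[p] K x‖ = ‖x‖)
    (k : ℕ) (hk : 1 ≤ k)
    (D : ℤ)
    (hDp : IsSquare (D : ZMod p) ∧ (D : ZMod p) ≠ 0) :
    (∀ n : ℕ, (quadSet p D n).Finite) ∧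
    (∀ h : ℕ, ∀ z ∈ affinoid p K h, ∀ n : ℕ, ∀ Q ∈ quadSet p D n,
      (Q.1 : K) * z ^ 2 + (Q.2.1 : K) * z + (Q.2.2 : K) ≠ 0) ∧
    (∀ h : ℕ, ∃ g : K → K,
      TendstoUniformlyOn
        (fun (N : ℕ) (z : K) => ∑ n ∈ Finset.range (N + 1), (p : K) ^ (n * k) *
          ∑' Q : quadSet p D n,
            (((Q : ℤ × ℤ × ℤ).1.sign : ℤ) : K) *
              (((Q : ℤ × ℤ × ℤ).1 : K) * z ^ 2 + ((Q : ℤ × ℤ × ℤ).2.1 : K) * z +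
                ((Q : ℤ × ℤ × ℤ).2.2 : K)) ^ (-(k : ℤ)))
        g atTop (affinoid p K h)) := by
  have : IsUltrametricDist K := isUltrametricDist_of_norm_algebraMap hK
  obtain ⟨s, hs⟩ := PadicInt.exists_sq_eq_intCast hp hDp.1 hDp.2
  have hs' : (s : ℚ_[p]) ^ 2 = D := by exact_mod_cast congrArg ((↑) : ℤ_[p] → ℚ_[p]) hs
  have hp_pos : 0 < p := (Fact.out : p.Prime).pos
  refine ⟨quadSet_finite p D, fun h z hz n Q hQ => ?_, fun h => ⟨fun z => ∑' n, seriesTerm p K D k n z, ?_⟩⟩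
  · exact norm_pos_iff.mp ((show (0 : ℝ) < ((p : ℝ) ^ (4 * h))⁻¹ by positivity).trans_le (inv_pow_le_norm_quadEval hK hs' hz hQ))
  · have hr : ((p : ℝ) ^ k)⁻¹ < 1 :=
      inv_lt_one_of_one_lt₀ (one_lt_pow₀ (by exact_mod_cast (Fact.out : p.Prime).one_lt) (by omega))
    exact tendstoUniformlyOn_sum_range_succ_of_norm_le_geometric (f := seriesTerm p K D k)
      (by positivity) hr fun n z hz => norm_seriesTerm_le hK hs' hz k n

/-- Let `p` be an odd prime, `k ≥ 1` odd, and `D > 0` a nonsquare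
integer which is a nonzero square mod `p`.  Then: (i) each `S_n` is finite;
(ii) `Q(z,1) ≠ 0` for `z ∈ H_p^{≤h}` and `Q ∈ ⋃ S_n`; (iii) for every `h ≥ 0` the
partial sums `F_N(z) = Σ_{n=0}^N p^{nk} Σ_{Q∈S_n} sgn(A)·Q(z,1)^{−k}` converge
uniformly on `H_p^{≤h}` as `N → ∞`.
Here `ℂ_p` is modelled by a complete algebraically closed normed field `K` equipped
with an isometric `ℚ_[p]`-algebra structure. -/
theorem stmt1 (p : ℕ) [Fact p.Prime] (hp : p ≠ 2)
    (K : Type*) [NormedField K] [Algebra ℚ_[p] K] [IsAlgClosed K] [CompleteSpace K]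
    (hK : ∀ x : ℚ_[p], ‖algebraMap ℚ_[p] K x‖ = ‖x‖)
    (k : ℕ) (hk : 1 ≤ k) (hkodd : Odd k)
    (D : ℤ) (hD : 0 < D) (hDns : ¬ IsSquare D)
    (hDp : IsSquare (D : ZMod p) ∧ (D : ZMod p) ≠ 0) :
    (∀ n : ℕ, (quadSet p D n).Finite) ∧
    (∀ h : ℕ, ∀ z ∈ affinoid p K h, ∀ n : ℕ, ∀ Q ∈ quadSet p D n,
      (Q.1 : K) * z ^ 2 + (Q.2.1 : K) * z + (Q.2.2 : K) ≠ 0) ∧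
    (∀ h : ℕ, ∃ g : K → K,
      TendstoUniformlyOn
        (fun (N : ℕ) (z : K) => ∑ n ∈ Finset.range (N + 1), (p : K) ^ (n * k) *
          ∑' Q : quadSet p D n,
            (((Q : ℤ × ℤ × ℤ).1.sign : ℤ) : K) *
              (((Q : ℤ × ℤ × ℤ).1 : K) * z ^ 2 + ((Q : ℤ × ℤ × ℤ).2.1 : K) * z +
                ((Q : ℤ × ℤ × ℤ).2.2 : K)) ^ (-(k : ℤ)))
        g atTop (affinoid p K h)) :=
  stmt1_general p hp K hK k hk D hDp
end

section
/- For all integers k ≥ 1, i with 0 ≤ i ≤ 2k−2, and l ≥ 0, one has C(2k−2, k−1) · Σ_{t = max(0, k−1−i)}^{2k−2−i} C(k−1, t) · C(k−1, 2k−2−i−t) · C(i+t−k+1, l) = C(2k−2, i) · C(i, l) · C(2k−2−l, k−1), where C(n,m) denotes the binomial coefficient (with C(n,m) = 0 whenever m > n ≥ 0). -/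
/-! Put `n = k - 1` and `j = i + t - n`. By symmetry of binomial coefficients the sum becomes
`∑_{a + j = i} C(n, a) C(n, j) C(j, l)`. Since `C(n, j) C(j, l) = C(n, l) C(n - l, j - l)`,
Vandermonde's identity evaluates it to `C(n, l) C(2n - l, i - l)`, and both sides of the claim
then equal `C(2n, l) C(2n - l, i - l) C(2n - l, n)`. -/

open Finset

theorem Nat.sum_antidiagonal_choose_mul_choose_mul_choose (n m l r : ℕ) :
    ∑ p ∈ antidiagonal (l + r), n.choose p.1 * p.1.choose l * m.choose p.2
      = n.choose l * (n - l + m).choose r := by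
  -- the terms with `j < l` vanish; in the others write `j = l + x`
  rw [Nat.sum_antidiagonal_eq_sum_range_succ (fun j a => n.choose j * j.choose l * m.choose a),
    show (l + r).succ = l + (r + 1) by omega, sum_range_add,
    sum_eq_zero fun j hj => by rw [Nat.choose_eq_zero_of_lt (mem_range.1 hj), mul_zero, zero_mul],
    zero_add, Nat.add_choose_eq, Nat.sum_antidiagonal_eq_sum_range_succ
      (fun a b => (n - l).choose a * m.choose b), mul_sum]
  refine sum_congr rfl fun x _ => ?_
  rw [Nat.choose_mul (Nat.le_add_right l x), Nat.add_sub_cancel_left,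
    Nat.add_sub_add_left, mul_assoc]

theorem Nat.sum_Icc_choose_mul_choose_eq_sum_antidiagonal (n i : ℕ) (hi : i ≤ 2 * n)
    (g : ℕ → ℕ) :
    ∑ t ∈ Icc (n - i) (2 * n - i), n.choose t * n.choose (2 * n - i - t) * g (i + t - n)
      = ∑ p ∈ antidiagonal i, n.choose p.1 * g p.1 * n.choose p.2 := by
  have le_of_ne_zero {a b c : ℕ} (h : a.choose b * c ≠ 0) : b ≤ a :=
    Nat.choose_ne_zero_iff.1 (left_ne_zero_of_mul h)
  have term_eq : ∀ t ∈ Icc (n - i) (2 * n - i), t ≤ n →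
      n.choose t * n.choose (2 * n - i - t) * g (i + t - n)
        = n.choose (i + t - n) * g (i + t - n) * n.choose (n - t) := by
    intro t ht htn
    rw [mem_Icc] at ht
    rw [Nat.choose_symm_of_eq_add (show n = (2 * n - i - t) + (i + t - n) by omega),
      Nat.choose_symm_of_eq_add (show n = t + (n - t) by omega)]
    ring
  refine sum_bij_ne_zero (fun t _ _ => (i + t - n, n - t)) ?_ ?_ ?_
    (fun t ht h => term_eq t ht (le_of_ne_zero (left_ne_zero_of_mul h)))
  · intro t ht h
    have := le_of_ne_zero (left_ne_zero_of_mul h)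
    rw [mem_Icc] at ht
    rw [HasAntidiagonal.mem_antidiagonal]
    omega
  · intro t₁ _ h₁ t₂ _ h₂ h
    have := le_of_ne_zero (left_ne_zero_of_mul h₁)
    have := le_of_ne_zero (left_ne_zero_of_mul h₂)
    rw [Prod.mk.injEq] at h
    omega
  · rintro ⟨a, b⟩ hp h
    dsimp only at hp h
    rw [HasAntidiagonal.mem_antidiagonal] at hp
    have ha := le_of_ne_zero (left_ne_zero_of_mul h)
    have hb := le_of_ne_zero (mul_comm (n.choose b) _ ▸ h)
    have ht : n - b ∈ Icc (n - i) (2 * n - i) := mem_Icc.2 (by omega)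
    have h₁ : i + (n - b) - n = a := by omega
    have h₂ : n - (n - b) = b := by omega
    refine ⟨n - b, ht, ?_, by rw [h₁, h₂]⟩
    rwa [term_eq _ ht (Nat.sub_le n b), h₁, h₂]

theorem Nat.choose_two_mul_mul_choose_mul_choose (n l r : ℕ) (h : l + r ≤ 2 * n) :
    (2 * n).choose n * (n.choose l * (n - l + n).choose r)
      = (2 * n).choose (l + r) * (l + r).choose l * (2 * n - l).choose n := by
  rcases le_or_gt l n with hln | hln
  · rw [Nat.choose_mul (Nat.le_add_right l r), Nat.add_sub_cancel_left, ← mul_assoc,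
      Nat.choose_mul hln, show n - l + n = 2 * n - l by omega,
      Nat.choose_symm_of_eq_add (show 2 * n - l = n - l + n by omega)]
    ring
  · rw [Nat.choose_eq_zero_of_lt hln, Nat.choose_eq_zero_of_lt (by omega : 2 * n - l < n)]
    simp

/-- For all integers `k ≥ 1`, `0 ≤ i ≤ 2k−2` and `l ≥ 0`:
`C(2k−2, k−1) · Σ_{t = max(0,k−1−i)}^{2k−2−i} C(k−1,t)·C(k−1,2k−2−i−t)·C(i+t−k+1, l)
  = C(2k−2, i)·C(i,l)·C(2k−2−l, k−1)`.
(In `ℕ`, the truncated subtraction `k - 1 - i` equals `max (0) (k−1−i)`, and for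
`t ≥ k−1−i` the quantity `i + t + 1 - k` equals `i + t − k + 1`.) -/
theorem stmt9 (k i l : ℕ) (hk : 1 ≤ k) (hi : i ≤ 2 * k - 2) :
    Nat.choose (2 * k - 2) (k - 1) *
        ∑ t ∈ Finset.Icc (k - 1 - i) (2 * k - 2 - i),
          Nat.choose (k - 1) t * Nat.choose (k - 1) (2 * k - 2 - i - t) *
            Nat.choose (i + t + 1 - k) l
      = Nat.choose (2 * k - 2) i * Nat.choose i l * Nat.choose (2 * k - 2 - l) (k - 1) := by
  obtain ⟨n, rfl⟩ : ∃ n, k = n + 1 := ⟨k - 1, by omega⟩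
  have hin : i ≤ 2 * n := by omega
  have h₁ : 2 * (n + 1) - 2 = 2 * n := by omega
  have h₂ : ∀ t, i + t + 1 - (n + 1) = i + t - n := fun t => by omega
  simp only [h₁, h₂, Nat.add_sub_cancel]
  rw [Nat.sum_Icc_choose_mul_choose_eq_sum_antidiagonal n i hin (·.choose l)]
  rcases le_or_gt l i with hl | hl
  · obtain ⟨r, rfl⟩ := Nat.exists_eq_add_of_le hl
    rw [Nat.sum_antidiagonal_choose_mul_choose_mul_choose,
      Nat.choose_two_mul_mul_choose_mul_choose n l r hin]
  · rw [Nat.choose_eq_zero_of_lt hl, mul_zero, zero_mul, sum_eq_zero, mul_zero]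
    intro p hp
    rw [Nat.choose_eq_zero_of_lt ((Nat.le.intro (mem_antidiagonal.1 hp)).trans_lt hl),
      mul_zero, zero_mul]
end

section
/- Let k ≥ 1 be an integer and 0 ≤ i ≤ 2k−2. Let Q = [a,b,c] be a binary quadratic form with rational coefficients, a ≠ 0, and positive nonsquare discriminant D = b²−4ac, with first and second real roots r₁, r₂, and let Q̃ := [−a, b, −c] (whose first and second roots are −r₁, −r₂). Let A_{Q,l}^{(i)}, B_{Q,l}^{(i)} (1 ≤ l ≤ k) be the partial fraction coefficients of z^i/((z−r₁)^k(z−r₂)^k) and A_{Q̃,l}^{(i)}, B_{Q̃,l}^{(i)} those of z^i/((z+r₁)^k(z+r₂)^k) (relative to the ordered pair of first and second roots). Then for all 1 ≤ l ≤ k: A_{Q̃,l}^{(i)} = (−1)^{l+i} A_{Q,l}^{(i)} and B_{Q̃,l}^{(i)} = (−1)^{l+i} B_{Q,l}^{(i)}; moreover for all r,s ∈ ℚ one has G^{Q,i}_{(r,s)} = (−1)^{i+1} G^{Q̃,i}_{(−r,−s)}. -/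
open Filter Topology

/-- Uniqueness of partial fraction coefficients: if a combination
`∑ l, (E l / (z−ρ₁)^l + F l / (z−ρ₂)^l)` vanishes for all `z ∉ {ρ₁, ρ₂}` with
`ρ₁ ≠ ρ₂`, then all the coefficients `E l` vanish. -/
lemma pf_unique (k : ℕ) (ρ₁ ρ₂ : ℝ) (hne : ρ₁ ≠ ρ₂) (E F : ℕ → ℝ)
    (h : ∀ z : ℝ, z ≠ ρ₁ → z ≠ ρ₂ →
      (∑ l ∈ Finset.Icc 1 k, (E l / (z - ρ₁) ^ l + F l / (z - ρ₂) ^ l)) = 0) :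
    ∀ l ∈ Finset.Icc 1 k, E l = 0 := by
  have key : ∀ m ∈ Finset.Icc 1 k, (∀ l ∈ Finset.Icc 1 k, m < l → E l = 0) → E m = 0 := by
    intro m hm hE
    rw [Finset.mem_Icc] at hm
    set g : ℝ → ℝ := fun z =>
      (∑ l ∈ Finset.Icc 1 m, E l * (z - ρ₁) ^ (m - l)) +
        (z - ρ₁) ^ m * ∑ l ∈ Finset.Icc 1 k, F l / (z - ρ₂) ^ l with hg
    have hd : ∀ l : ℕ, (ρ₁ - ρ₂) ^ l ≠ 0 := fun l => pow_ne_zero _ (sub_ne_zero.mpr hne)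
    have hcont : ContinuousAt g ρ₁ := by
      apply ContinuousAt.add
      · exact (continuous_finset_sum _ fun l _ => by fun_prop).continuousAt
      · apply ContinuousAt.mul (by fun_prop)
        exact tendsto_finset_sum _ fun l _ =>
          (ContinuousAt.div continuousAt_const (by fun_prop) (hd l) :
            ContinuousAt (fun z : ℝ => F l / (z - ρ₂) ^ l) ρ₁)
    have hgρ : g ρ₁ = E m := by
      rw [hg]
      simp only
      have h1 : ∑ l ∈ Finset.Icc 1 m, E l * (ρ₁ - ρ₁) ^ (m - l) = E m := by
        rw [Finset.sum_eq_single m]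
        · simp
        · intro l hl hlm
          rw [Finset.mem_Icc] at hl
          rw [sub_self, zero_pow (by omega), mul_zero]
        · intro hm'
          exact absurd (Finset.mem_Icc.mpr ⟨hm.1, le_refl m⟩) hm'
      rw [h1, sub_self, zero_pow (by omega), zero_mul, add_zero]
    have hev : ∀ᶠ z in 𝓝[≠] ρ₁, g z = 0 := by
      have h2 : ∀ᶠ z in 𝓝[≠] ρ₁, z ≠ ρ₂ :=
        (eventually_ne_nhds hne).filter_mono nhdsWithin_le_nhds
      filter_upwards [h2, self_mem_nhdsWithin] with z hz2 hz1
      have hz1' : z ≠ ρ₁ := hz1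
      have hxz : z - ρ₁ ≠ 0 := sub_ne_zero.mpr hz1'
      have hEsub : ∑ l ∈ Finset.Icc 1 k, E l / (z - ρ₁) ^ l
          = ∑ l ∈ Finset.Icc 1 m, E l / (z - ρ₁) ^ l := by
        symm
        apply Finset.sum_subset
        · intro l hl
          rw [Finset.mem_Icc] at hl ⊢
          exact ⟨hl.1, hl.2.trans hm.2⟩
        · intro l hl hlm
          rw [Finset.mem_Icc] at hlm
          have hl' := Finset.mem_Icc.mp hl
          rw [hE l hl (by omega), zero_div]
      have h0 := h z hz1' hz2
      rw [Finset.sum_add_distrib] at h0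
      rw [hg]
      simp only
      have hterm : ∑ l ∈ Finset.Icc 1 m, E l * (z - ρ₁) ^ (m - l)
          = (z - ρ₁) ^ m * ∑ l ∈ Finset.Icc 1 m, E l / (z - ρ₁) ^ l := by
        rw [Finset.mul_sum]
        refine Finset.sum_congr rfl fun l hl => ?_
        rw [Finset.mem_Icc] at hl
        rw [pow_sub₀ _ hxz hl.2]
        rw [div_eq_mul_inv]
        ring
      rw [hterm, ← hEsub, ← mul_add, h0, mul_zero]
    have t1 : Tendsto g (𝓝[≠] ρ₁) (𝓝 (E m)) := by
      rw [← hgρ]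
      exact hcont.tendsto.mono_left nhdsWithin_le_nhds
    have t2 : Tendsto g (𝓝[≠] ρ₁) (𝓝 0) := by
      rw [tendsto_congr' hev]
      exact tendsto_const_nhds
    exact tendsto_nhds_unique t1 t2
  have H : ∀ j : ℕ, ∀ m ∈ Finset.Icc 1 k, k - m ≤ j → E m = 0 := by
    intro j
    induction j with
    | zero =>
      intro m hm hle
      refine key m hm fun l hl hml => ?_
      rw [Finset.mem_Icc] at hm hl
      exact absurd hml (by omega)
    | succ j ih =>
      intro m hm hle
      refine key m hm fun l hl hml => ?_
      refine ih l hl ?_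
      rw [Finset.mem_Icc] at hm hl
      omega
  intro l hl
  exact H k l hl (by omega)

/-- The boundary term `G^{Q,i}_{(r,s)}` attached to partial fraction coefficients
`A l, B l` of `z^i/((z−r₁)^k(z−r₂)^k)` and rational endpoints `r, s`:
`G := Σ_{l=2}^{k} [ A_l/((1−l)(s−r₁)^{l−1}) + B_l/((1−l)(s−r₂)^{l−1})
  − A_l/((1−l)(r−r₁)^{l−1}) − B_l/((1−l)(r−r₂)^{l−1}) ]
  + A₁·ln|(s−r₁)/(s−r₂)| − A₁·ln|(r−r₁)/(r−r₂)|`. -/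
noncomputable def Gterm (k : ℕ) (A B : ℕ → ℝ) (r₁ r₂ : ℝ) (r s : ℚ) : ℝ :=
  (∑ l ∈ Finset.Icc 2 k,
    (A l / ((1 - (l : ℝ)) * ((s : ℝ) - r₁) ^ (l - 1)) +
     B l / ((1 - (l : ℝ)) * ((s : ℝ) - r₂) ^ (l - 1)) -
     A l / ((1 - (l : ℝ)) * ((r : ℝ) - r₁) ^ (l - 1)) -
     B l / ((1 - (l : ℝ)) * ((r : ℝ) - r₂) ^ (l - 1)))) +
  A 1 * Real.log |((s : ℝ) - r₁) / ((s : ℝ) - r₂)| -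
  A 1 * Real.log |((r : ℝ) - r₁) / ((r : ℝ) - r₂)|

/-- Let `Q = [a,b,c]` be a rational binary quadratic form with `a ≠ 0`
and positive nonsquare discriminant, with first and second roots `r₁, r₂`, and let
`Q̃ = [−a,b,−c]` (with roots `−r₁, −r₂`).  If `A l, B l` are the partial fraction
coefficients of `z^i/((z−r₁)^k(z−r₂)^k)` and `A' l, B' l` those of
`z^i/((z+r₁)^k(z+r₂)^k)`, then `A' l = (−1)^{l+i} A l`, `B' l = (−1)^{l+i} B l` for
`1 ≤ l ≤ k`, and `G^{Q,i}_{(r,s)} = (−1)^{i+1}·G^{Q̃,i}_{(−r,−s)}` for all `r, s ∈ ℚ`. -/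
theorem stmt11 (k i : ℕ) (hk : 1 ≤ k) (hi : i ≤ 2 * k - 2)
    (a b c : ℚ) (ha : a ≠ 0)
    (hDpos : 0 < b ^ 2 - 4 * a * c) (hDns : ¬ ∃ q : ℚ, q ^ 2 = b ^ 2 - 4 * a * c)
    (r₁ r₂ : ℝ)
    (hr₁ : r₁ = (-(b : ℝ) + Real.sqrt ((b : ℝ) ^ 2 - 4 * (a : ℝ) * (c : ℝ))) / (2 * (a : ℝ)))
    (hr₂ : r₂ = (-(b : ℝ) - Real.sqrt ((b : ℝ) ^ 2 - 4 * (a : ℝ) * (c : ℝ))) / (2 * (a : ℝ)))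
    (A B A' B' : ℕ → ℝ)
    (hAB : ∀ z : ℝ, z ≠ r₁ → z ≠ r₂ →
      z ^ i / ((z - r₁) ^ k * (z - r₂) ^ k) =
        ∑ l ∈ Finset.Icc 1 k, (A l / (z - r₁) ^ l + B l / (z - r₂) ^ l))
    (hAB' : ∀ z : ℝ, z ≠ -r₁ → z ≠ -r₂ →
      z ^ i / ((z + r₁) ^ k * (z + r₂) ^ k) =
        ∑ l ∈ Finset.Icc 1 k, (A' l / (z + r₁) ^ l + B' l / (z + r₂) ^ l)) :
    (∀ l ∈ Finset.Icc 1 k,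
      A' l = (-1 : ℝ) ^ (l + i) * A l ∧ B' l = (-1 : ℝ) ^ (l + i) * B l) ∧
    (∀ r s : ℚ,
      Gterm k A B r₁ r₂ r s = (-1 : ℝ) ^ (i + 1) * Gterm k A' B' (-r₁) (-r₂) (-r) (-s)) := by
  -- the roots are distinct
  have hD : (0 : ℝ) < (b : ℝ) ^ 2 - 4 * (a : ℝ) * (c : ℝ) := by
    have := hDpos
    push_cast [← Rat.cast_lt (K := ℝ)] at this ⊢
    convert this using 1 <;> push_cast <;> ring
  have hsq : 0 < Real.sqrt ((b : ℝ) ^ 2 - 4 * (a : ℝ) * (c : ℝ)) := Real.sqrt_pos.2 hD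
  have ha' : (a : ℝ) ≠ 0 := by exact_mod_cast ha
  have h2a : (2 * (a : ℝ)) ≠ 0 := by
    simp [ha']
  have hne : r₁ ≠ r₂ := by
    rw [hr₁, hr₂]
    intro hEq
    rw [div_eq_div_iff h2a h2a] at hEq
    have h4 : Real.sqrt ((b : ℝ) ^ 2 - 4 * (a : ℝ) * (c : ℝ)) * (4 * (a : ℝ)) = 0 := by
      linarith [hEq]
    rcases mul_eq_zero.mp h4 with h | h
    · exact absurd h hsq.ne'
    · exact absurd (by linarith : (a : ℝ) = 0) ha'
  have hne' : -r₁ ≠ -r₂ := fun hc => hne (neg_injective hc)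
  -- the transformed partial fraction expansion
  have key1 : ∀ z : ℝ, z ≠ -r₁ → z ≠ -r₂ →
      z ^ i / ((z + r₁) ^ k * (z + r₂) ^ k) =
        ∑ l ∈ Finset.Icc 1 k,
          ((-1 : ℝ) ^ (l + i) * A l / (z + r₁) ^ l +
           (-1 : ℝ) ^ (l + i) * B l / (z + r₂) ^ l) := by
    intro z hz1 hz2
    have hz1' : (-z) ≠ r₁ := fun hc => hz1 (by rw [← hc, neg_neg])
    have hz2' : (-z) ≠ r₂ := fun hc => hz2 (by rw [← hc, neg_neg])
    have h1 := hAB (-z) hz1' hz2'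
    rw [show -z - r₁ = -(z + r₁) from by ring, show -z - r₂ = -(z + r₂) from by ring] at h1
    simp only [neg_pow (z + r₁), neg_pow (z + r₂), neg_pow z] at h1
    have hkk : ((-1 : ℝ) ^ k) * ((-1 : ℝ) ^ k) = 1 := by
      rw [← pow_add]
      exact Even.neg_one_pow ⟨k, rfl⟩
    have hcan : ((-1 : ℝ) ^ k * (z + r₁) ^ k * ((-1 : ℝ) ^ k * (z + r₂) ^ k))
        = (z + r₁) ^ k * (z + r₂) ^ k := by
      linear_combination ((z + r₁) ^ k * (z + r₂) ^ k) * hkk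
    rw [hcan] at h1
    have hii : ((-1 : ℝ) ^ i) * ((-1 : ℝ) ^ i) = 1 := by
      rw [← pow_add]
      exact Even.neg_one_pow ⟨i, rfl⟩
    have hgi : z ^ i / ((z + r₁) ^ k * (z + r₂) ^ k)
        = (-1 : ℝ) ^ i * ((-1 : ℝ) ^ i * z ^ i / ((z + r₁) ^ k * (z + r₂) ^ k)) := by
      rw [← mul_div_assoc, ← mul_assoc, hii, one_mul]
    rw [hgi, h1, Finset.mul_sum]
    refine Finset.sum_congr rfl fun l hl => ?_
    have hu : ((-1 : ℝ) ^ l)⁻¹ = (-1 : ℝ) ^ l := by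
      rw [← inv_pow, inv_neg_one]
    rw [pow_add]
    simp only [div_eq_mul_inv, mul_inv, hu]
    ring
  -- the vanishing difference
  have hdiff : ∀ z : ℝ, z ≠ -r₁ → z ≠ -r₂ →
      (∑ l ∈ Finset.Icc 1 k,
        ((A' l - (-1 : ℝ) ^ (l + i) * A l) / (z - -r₁) ^ l +
         (B' l - (-1 : ℝ) ^ (l + i) * B l) / (z - -r₂) ^ l)) = 0 := by
    intro z hz1 hz2
    simp only [sub_neg_eq_add]
    have h3 := (hAB' z hz1 hz2).symm.trans (key1 z hz1 hz2)
    have h4 : ∑ l ∈ Finset.Icc 1 k,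
        ((A' l - (-1 : ℝ) ^ (l + i) * A l) / (z + r₁) ^ l +
         (B' l - (-1 : ℝ) ^ (l + i) * B l) / (z + r₂) ^ l)
        = (∑ l ∈ Finset.Icc 1 k, (A' l / (z + r₁) ^ l + B' l / (z + r₂) ^ l)) -
          (∑ l ∈ Finset.Icc 1 k,
            ((-1 : ℝ) ^ (l + i) * A l / (z + r₁) ^ l +
             (-1 : ℝ) ^ (l + i) * B l / (z + r₂) ^ l)) := by
      rw [← Finset.sum_sub_distrib]
      refine Finset.sum_congr rfl fun l _ => ?_
      simp only [div_eq_mul_inv]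
      ring
    rw [h4, h3, sub_self]
  have hdiff' : ∀ z : ℝ, z ≠ -r₂ → z ≠ -r₁ →
      (∑ l ∈ Finset.Icc 1 k,
        ((B' l - (-1 : ℝ) ^ (l + i) * B l) / (z - -r₂) ^ l +
         (A' l - (-1 : ℝ) ^ (l + i) * A l) / (z - -r₁) ^ l)) = 0 := by
    intro z hz2 hz1
    rw [← hdiff z hz1 hz2]
    exact Finset.sum_congr rfl fun l _ => add_comm _ _
  have hA0 := pf_unique k (-r₁) (-r₂) hne'
    (fun l => A' l - (-1 : ℝ) ^ (l + i) * A l)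
    (fun l => B' l - (-1 : ℝ) ^ (l + i) * B l) hdiff
  have hB0 := pf_unique k (-r₂) (-r₁) (hne'.symm ∘ Eq.symm |>.comp id |> fun _ => hne'.symm)
    (fun l => B' l - (-1 : ℝ) ^ (l + i) * B l)
    (fun l => A' l - (-1 : ℝ) ^ (l + i) * A l) hdiff'
  have hco : ∀ l ∈ Finset.Icc 1 k,
      A' l = (-1 : ℝ) ^ (l + i) * A l ∧ B' l = (-1 : ℝ) ^ (l + i) * B l := by
    intro l hl
    exact ⟨sub_eq_zero.mp (hA0 l hl), sub_eq_zero.mp (hB0 l hl)⟩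
  refine ⟨hco, ?_⟩
  intro r s
  obtain ⟨hA1, _⟩ := hco 1 (Finset.mem_Icc.mpr ⟨le_refl 1, hk⟩)
  unfold Gterm
  have es1 : ((-s : ℚ) : ℝ) - -r₁ = -((s : ℝ) - r₁) := by push_cast; ring
  have es2 : ((-s : ℚ) : ℝ) - -r₂ = -((s : ℝ) - r₂) := by push_cast; ring
  have er1 : ((-r : ℚ) : ℝ) - -r₁ = -((r : ℝ) - r₁) := by push_cast; ring
  have er2 : ((-r : ℚ) : ℝ) - -r₂ = -((r : ℝ) - r₂) := by push_cast; ring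
  simp only [es1, es2, er1, er2, neg_pow ((s : ℝ) - r₁), neg_pow ((s : ℝ) - r₂),
    neg_pow ((r : ℝ) - r₁), neg_pow ((r : ℝ) - r₂), neg_div_neg_eq, hA1]
  have hsum : ∑ l ∈ Finset.Icc 2 k,
      (A l / ((1 - (l : ℝ)) * ((s : ℝ) - r₁) ^ (l - 1)) +
       B l / ((1 - (l : ℝ)) * ((s : ℝ) - r₂) ^ (l - 1)) -
       A l / ((1 - (l : ℝ)) * ((r : ℝ) - r₁) ^ (l - 1)) -
       B l / ((1 - (l : ℝ)) * ((r : ℝ) - r₂) ^ (l - 1)))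
      = (-1 : ℝ) ^ (i + 1) * ∑ l ∈ Finset.Icc 2 k,
      (A' l / ((1 - (l : ℝ)) * ((-1 : ℝ) ^ (l - 1) * ((s : ℝ) - r₁) ^ (l - 1))) +
       B' l / ((1 - (l : ℝ)) * ((-1 : ℝ) ^ (l - 1) * ((s : ℝ) - r₂) ^ (l - 1))) -
       A' l / ((1 - (l : ℝ)) * ((-1 : ℝ) ^ (l - 1) * ((r : ℝ) - r₁) ^ (l - 1))) -
       B' l / ((1 - (l : ℝ)) * ((-1 : ℝ) ^ (l - 1) * ((r : ℝ) - r₂) ^ (l - 1)))) := by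
    rw [Finset.mul_sum]
    refine Finset.sum_congr rfl fun l hl => ?_
    rw [Finset.mem_Icc] at hl
    obtain ⟨hAl, hBl⟩ := hco l (Finset.mem_Icc.mpr ⟨by omega, hl.2⟩)
    rw [hAl, hBl]
    have hc : (-1 : ℝ) ^ (i + 1) * ((-1 : ℝ) ^ (l + i) * (-1 : ℝ) ^ (l - 1)) = 1 := by
      rw [← pow_add, ← pow_add]
      exact Even.neg_one_pow ⟨i + l, by omega⟩
    have key4 : ∀ C X : ℝ,
        (-1 : ℝ) ^ (i + 1) *
          ((-1 : ℝ) ^ (l + i) * C / ((1 - (l : ℝ)) * ((-1 : ℝ) ^ (l - 1) * X)))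
        = C / ((1 - (l : ℝ)) * X) := by
      intro C X
      simp only [div_eq_mul_inv, mul_inv]
      rw [show ((-1 : ℝ) ^ (l - 1))⁻¹ = (-1 : ℝ) ^ (l - 1) from by rw [← inv_pow, inv_neg_one]]
      linear_combination (C * ((1 - (l : ℝ)))⁻¹ * X⁻¹) * hc
    rw [mul_sub, mul_sub, mul_add]
    simp only [key4]
  have hc1 : (-1 : ℝ) ^ (i + 1) * (-1 : ℝ) ^ (1 + i) = 1 := by
    rw [← pow_add]
    exact Even.neg_one_pow ⟨i + 1, by omega⟩
  linear_combination hsum - (A 1 * Real.log |((s : ℝ) - r₁) / ((s : ℝ) - r₂)| -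
    A 1 * Real.log |((r : ℝ) - r₁) / ((r : ℝ) - r₂)|) * hc1
end

section
/- Let p be an odd prime, k ≥ 3 odd, and D > 0 a nonsquare integer which is a nonzero square modulo p; fix a square root √D ∈ ℚ_p. Then the series f_{k,D}^{(p)}(z) := Σ_Q (γ_Q·e₀)·Q(z,1)^{−k}, the sum over all Heegner forms Q of discriminant D, converges absolutely and locally uniformly on the complex upper half-plane ℍ, and the resulting holomorphic function is a cusp form of weight 2k for the congruence subgroup Γ₀(p); in particular (cz+d)^{−2k}·f_{k,D}^{(p)}((az+b)/(cz+d)) = f_{k,D}^{(p)}(z) for every [[a,b],[c,d]] ∈ SL₂(ℤ) with p ∣ c. -/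
/-
Writing `z = x + iy`, one has `|Q(z,1)| ≥ |a| y²` and `|Q(z,1)| ≥ |Im Q(z,1)| = |2ax + b| y`, so
locally uniformly on `ℍ` the term `|Q(z,1)|^{-k}` is bounded by a constant times
`max(|a|,|b|)^{-k}`. A form of nonsquare discriminant `D` has `a ≠ 0` and is determined by `(a, b)`,
so the series is dominated by `∑_{(a,b) ≠ 0} max(|a|,|b|)^{-k}`, which converges for `k > 2`; this
gives absolute and locally uniform convergence, hence holomorphy.

For `γ = [[a,b],[c,d]] ∈ Γ₀(p)`, `Q ↦ Q ∘ γ` permutes the Heegner forms, `(Q ∘ γ)(z,1) =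
(cz+d)² Q(γz,1)`, and the `p`-adic roots of `Q ∘ γ` are the images of those of `Q` under `γ⁻¹`.
Möbius transformations in `Γ₀(p)` preserve `ℤ_p` and its complement in `ℚ_p`, so `(γ_Q·e₀)` is
`Γ₀(p)`-invariant and the series transforms with weight `2k`. At the cusp `γ∞` (any `γ ∈ SL₂(ℤ)`)
the slashed series is bounded by the same majorant over the forms `Q ∘ γ`; translating `z` into
`0 ≤ Re z < 1` makes the constant `≍ Im z`, so it tends to `0`.
-/

open Complex Filter

/-- Heegner forms of discriminant `D` and level `p`: integral binary quadratic forms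
`[a,b,c]` with `b² − 4ac = D` and `p ∣ a`. -/
def HeegnerForm (p : ℕ) (D : ℤ) : Type :=
  {Q : ℤ × ℤ × ℤ // Q.2.1 ^ 2 - 4 * Q.1 * Q.2.2 = D ∧ (p : ℤ) ∣ Q.1}

/-- The `p`-adic intersection number `(γ_Q · e₀) ∈ {±1}` of a form `[a,b,c]`, for a
fixed square root `sq` of the discriminant in `ℚ_p`: it is `+1` if the first `p`-adic
root `ρ₁ = (−b+sq)/(2a)` has `v_p(ρ₁) ≥ 0` and the second root `ρ₂ = (−b−sq)/(2a)` has
`v_p(ρ₂) ≤ −1`, and `−1` otherwise (for Heegner forms the remaining case is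
`v_p(ρ₁) ≤ −1`, `v_p(ρ₂) ≥ 0`). -/
noncomputable def gQe0 (p : ℕ) [Fact p.Prime] (sq : ℚ_[p]) (Q : ℤ × ℤ × ℤ) : ℤ :=
  if 0 ≤ (((-Q.2.1 : ℤ) + sq) / (2 * (Q.1 : ℚ_[p]))).valuation ∧
      (((-Q.2.1 : ℤ) - sq) / (2 * (Q.1 : ℚ_[p]))).valuation ≤ -1 then 1 else -1

/-- The general term `(γ_Q·e₀)·Q(z,1)^{−k}` of the series `f_{k,D}^{(p)}`. -/
noncomputable def heegTerm (p : ℕ) [Fact p.Prime] (D : ℤ) (sq : ℚ_[p]) (k : ℕ)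
    (Q : HeegnerForm p D) (z : ℂ) : ℂ :=
  ((gQe0 p sq Q.1 : ℤ) : ℂ) *
    ((Q.1.1 : ℂ) * z ^ 2 + (Q.1.2.1 : ℂ) * z + (Q.1.2.2 : ℂ)) ^ (-(k : ℤ))

lemma isCoprime_of_mul_sub_mul_eq_one {a b c d N : ℤ} (hdet : a * d - b * c = 1) (hc : N ∣ c) :
    IsCoprime a N := by
  obtain ⟨m, rfl⟩ := hc
  exact ⟨d, -(b * m), by linear_combination hdet⟩

namespace ModularGroup

open scoped MatrixGroups

lemma entries_det_eq_one (γ : SL(2, ℤ)) : γ 0 0 * γ 1 1 - γ 0 1 * γ 1 0 = 1 :=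
  (Matrix.det_fin_two _).symm.trans γ.det_coe

lemma coe_smul_eq_div (γ : SL(2, ℤ)) (τ : UpperHalfPlane) :
    ((γ • τ : UpperHalfPlane) : ℂ) = (γ 0 0 * τ + γ 0 1) / (γ 1 0 * τ + γ 1 1) := by
  rw [UpperHalfPlane.coe_specialLinearGroup_apply]
  simp

end ModularGroup

namespace BinaryForm

def disc (v : ℤ × ℤ × ℤ) : ℤ := v.2.1 ^ 2 - 4 * v.1 * v.2.2

noncomputable def eval (v : ℤ × ℤ × ℤ) (z : ℂ) : ℂ :=
  (v.1 : ℂ) * z ^ 2 + (v.2.1 : ℂ) * z + (v.2.2 : ℂ)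

/-- The form `(x, y) ↦ v(ax + by, cx + dy)`. -/
def act (a b c d : ℤ) (v : ℤ × ℤ × ℤ) : ℤ × ℤ × ℤ :=
  (v.1 * a ^ 2 + v.2.1 * a * c + v.2.2 * c ^ 2,
   2 * v.1 * a * b + v.2.1 * (a * d + b * c) + 2 * v.2.2 * c * d,
   v.1 * b ^ 2 + v.2.1 * b * d + v.2.2 * d ^ 2)

def coeffs (v : ℤ × ℤ × ℤ) : Fin 2 → ℤ := ![v.1, v.2.1]

variable {a b c d : ℤ} {D : ℤ} {v : ℤ × ℤ × ℤ} {z : ℂ} {k : ℕ}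

lemma disc_act (a b c d : ℤ) (v : ℤ × ℤ × ℤ) :
    disc (act a b c d v) = (a * d - b * c) ^ 2 * disc v := by
  simp only [disc, act]
  ring

lemma act_inv_act (hdet : a * d - b * c = 1) (v : ℤ × ℤ × ℤ) :
    act d (-b) (-c) a (act a b c d v) = v := by
  obtain ⟨A, B, C⟩ := v
  simp only [act, Prod.mk.injEq]
  refine ⟨?_, ?_, ?_⟩
  · linear_combination A * (a * d - b * c + 1) * hdet
  · linear_combination B * (a * d - b * c + 1) * hdet
  · linear_combination C * (a * d - b * c + 1) * hdet

lemma eval_act (a b c d : ℤ) (v : ℤ × ℤ × ℤ) (hcd : (c : ℂ) * z + d ≠ 0) :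
    eval (act a b c d v) z = ((c : ℂ) * z + d) ^ 2 * eval v ((a * z + b) / (c * z + d)) := by
  simp only [eval, act]
  push_cast
  field_simp
  ring

lemma eval_act_translate (n : ℤ) (v : ℤ × ℤ × ℤ) (z : ℂ) :
    eval (act 1 n 0 1 v) z = eval v (z + n) := by
  simp only [eval, act]
  push_cast
  ring

lemma mul_add_ne_zero_of_det (hdet : a * d - b * c = 1) (hz : z.im ≠ 0) : (c : ℂ) * z + d ≠ 0 := by
  have hcd : ![(c : ℝ), d] ≠ 0 := fun h => by
    have hc : (c : ℝ) = 0 := congrFun h 0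
    have hd : (d : ℝ) = 0 := congrFun h 1
    simp_all
  simpa using UpperHalfPlane.linear_ne_zero_of_im hz hcd

lemma eval_moebius_zpow (hcd : (c : ℂ) * z + d ≠ 0) (k : ℤ) :
    eval v ((a * z + b) / (c * z + d)) ^ (-k) =
      ((c : ℂ) * z + d) ^ (2 * k) * eval (act a b c d v) z ^ (-k) := by
  rw [eval_act a b c d v hcd, mul_zpow, ← mul_assoc, ← zpow_natCast, ← zpow_mul,
    ← zpow_add₀ hcd]
  norm_num

def actEquiv (hdet : a * d - b * c = 1) : (ℤ × ℤ × ℤ) ≃ (ℤ × ℤ × ℤ) where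
  toFun := act a b c d
  invFun := act d (-b) (-c) a
  left_inv := act_inv_act hdet
  right_inv v := by
    simpa using act_inv_act (a := d) (b := -b) (c := -c) (d := a) (by linear_combination hdet) v

lemma act_injective (hdet : a * d - b * c = 1) : Function.Injective (act a b c d) :=
  (actEquiv hdet).injective

lemma disc_act_of_det (hdet : a * d - b * c = 1) (v : ℤ × ℤ × ℤ) :
    disc (act a b c d v) = disc v := by
  rw [disc_act, hdet, one_pow, one_mul]

lemma dvd_act_fst_iff {N : ℤ} (hdet : a * d - b * c = 1) (hc : N ∣ c) :
    N ∣ (act a b c d v).1 ↔ N ∣ v.1 := by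
  have h : (act a b c d v).1 = v.1 * a ^ 2 + c * (v.2.1 * a + v.2.2 * c) := by
    simp only [act]
    ring
  rw [h, dvd_add_left (dvd_mul_of_dvd_left hc _)]
  exact ⟨(isCoprime_of_mul_sub_mul_eq_one hdet hc).pow_left.symm.dvd_of_dvd_mul_right,
    fun h => dvd_mul_of_dvd_left h _⟩

lemma fst_ne_zero_of_not_isSquare (h : ¬ IsSquare (disc v)) : v.1 ≠ 0 := by
  intro h0
  exact h ⟨v.2.1, by simp [disc, h0, sq]⟩

lemma coeffs_injOn (hD : ¬ IsSquare D) : Set.InjOn coeffs {v | disc v = D} := by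
  rintro ⟨A, B, C⟩ hv ⟨A', B', C'⟩ hv' h
  have hA : A = A' := congrFun h 0
  have hB : B = B' := congrFun h 1
  subst hA hB
  have hA0 : A ≠ 0 := fst_ne_zero_of_not_isSquare (v := (A, B, C)) (hv ▸ hD)
  simp only [Set.mem_ofPred_eq, disc] at hv hv'
  have : 4 * A * C = 4 * A * C' := by linarith
  simp [mul_left_cancel₀ (by positivity : 4 * A ≠ 0) this]

lemma norm_eval_sq (v : ℤ × ℤ × ℤ) (z : ℂ) :
    ‖eval v z‖ ^ 2 = ((v.1 : ℝ) * (z.re ^ 2 + z.im ^ 2) + v.2.1 * z.re + v.2.2) ^ 2 +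
      (disc v : ℝ) * z.im ^ 2 := by
  rw [← Complex.normSq_eq_norm_sq, Complex.normSq_apply]
  simp only [eval, disc, sq, add_re, add_im, mul_re, mul_im, intCast_re, intCast_im]
  push_cast
  ring

lemma im_eval (v : ℤ × ℤ × ℤ) (z : ℂ) : (eval v z).im = (2 * v.1 * z.re + v.2.1) * z.im := by
  simp only [eval, sq, add_im, mul_re, mul_im, intCast_re, intCast_im]
  ring

lemma eval_ne_zero (hD : 0 < disc v) (hz : 0 < z.im) : eval v z ≠ 0 := by
  intro h
  have h2 := norm_eval_sq v z
  rw [h, norm_zero] at h2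
  have : (0 : ℝ) < disc v * z.im ^ 2 := by positivity
  nlinarith

lemma abs_fst_mul_im_sq_le (hD : 0 ≤ disc v) (z : ℂ) : |(v.1 : ℝ)| * z.im ^ 2 ≤ ‖eval v z‖ := by
  rw [← sq_le_sq₀ (by positivity) (norm_nonneg _), norm_eval_sq, mul_pow, sq_abs]
  have hdisc : (disc v : ℝ) = (v.2.1 : ℝ) ^ 2 - 4 * v.1 * v.2.2 := by simp [disc]
  -- `‖eval v z‖² - a²y⁴ = u² + ((2ax + b)² + disc v) y² / 2`, where `u = ax² + bx + c`
  nlinarith [sq_nonneg ((v.1 : ℝ) * z.re ^ 2 + v.2.1 * z.re + v.2.2),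
    sq_nonneg ((2 * v.1 * z.re + v.2.1) * z.im),
    mul_nonneg ((Int.cast_nonneg (R := ℝ) hD)) (sq_nonneg z.im)]

noncomputable def boundConst (z : ℂ) : ℝ := z.im ^ 2 / (1 + z.im + 2 * |z.re|)

lemma boundConst_pos (hz : 0 < z.im) : 0 < boundConst z := by
  unfold boundConst
  positivity

lemma boundConst_mul_norm_coeffs_le (hD : 0 ≤ disc v) (hz : 0 < z.im) :
    boundConst z * ‖coeffs v‖ ≤ ‖eval v z‖ := by
  have ha := abs_fst_mul_im_sq_le hD z
  have hab : |2 * v.1 * z.re + v.2.1| * z.im ≤ ‖eval v z‖ := by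
    simpa [im_eval, abs_mul, abs_of_pos hz] using abs_im_le_norm (eval v z)
  have hb : |(v.2.1 : ℝ)| ≤ |2 * v.1 * z.re + v.2.1| + 2 * |z.re| * |(v.1 : ℝ)| := by
    calc |(v.2.1 : ℝ)| = |(2 * v.1 * z.re + v.2.1) - 2 * v.1 * z.re| := by ring_nf
      _ ≤ |2 * v.1 * z.re + v.2.1| + |2 * v.1 * z.re| := abs_sub _ _
      _ = _ := by rw [abs_mul, abs_mul, abs_two]; ring
  rw [boundConst, div_mul_eq_mul_div, div_le_iff₀ (by positivity), ← le_div_iff₀' (by positivity)]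
  refine (pi_norm_le_iff_of_nonneg (by positivity)).mpr (Fin.forall_fin_two.mpr ⟨?_, ?_⟩) <;>
    simp only [coeffs, Matrix.cons_val_zero, Matrix.cons_val_one, Int.norm_eq_abs] <;>
    rw [le_div_iff₀' (by positivity)]
  · nlinarith [abs_nonneg z.re, norm_nonneg (eval v z)]
  · nlinarith [abs_nonneg z.re, abs_nonneg (v.1 : ℝ), norm_nonneg (eval v z)]

lemma summable_norm_zpow_neg (hk : 2 < k) :
    Summable fun x : Fin 2 → ℤ => ‖x‖ ^ (-(k : ℤ)) := by
  simpa [← Real.rpow_intCast] using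
    EisensteinSeries.summable_one_div_norm_rpow (k := k) (by exact_mod_cast hk)

lemma norm_eval_zpow_le {m : ℝ} (hm : 0 < m) (hmz : m ≤ boundConst z) (hz : 0 < z.im)
    (hD : 0 ≤ disc v) (hv : v.1 ≠ 0) (k : ℕ) :
    ‖eval v z‖ ^ (-(k : ℤ)) ≤ m ^ (-(k : ℤ)) * ‖coeffs v‖ ^ (-(k : ℤ)) := by
  have hc : 0 < ‖coeffs v‖ := norm_pos_iff.mpr fun h => hv (congrFun h 0)
  have hle : m * ‖coeffs v‖ ≤ ‖eval v z‖ :=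
    (mul_le_mul_of_nonneg_right hmz hc.le).trans (boundConst_mul_norm_coeffs_le hD hz)
  rw [← mul_zpow, zpow_neg, zpow_neg]
  exact inv_anti₀ (by positivity) (zpow_le_zpow_left₀ (by positivity) (by positivity) hle)

variable {ι : Type*} {f : ι → ℤ × ℤ × ℤ}

lemma injective_coeffs_comp (hf : Function.Injective f) (hdisc : ∀ i, disc (f i) = D)
    (hDns : ¬ IsSquare D) : Function.Injective (coeffs ∘ f) :=
  fun i j h => hf (coeffs_injOn hDns (hdisc i) (hdisc j) h)

lemma norm_eval_comp_zpow_le (hdisc : ∀ i, disc (f i) = D) (hD : 0 < D) (hDns : ¬ IsSquare D)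
    {m : ℝ} (hm : 0 < m) (hmz : m ≤ boundConst z) (hz : 0 < z.im) (k : ℕ) (i : ι) :
    ‖eval (f i) z‖ ^ (-(k : ℤ)) ≤ m ^ (-(k : ℤ)) * ‖coeffs (f i)‖ ^ (-(k : ℤ)) :=
  norm_eval_zpow_le hm hmz hz (hdisc i ▸ hD.le) (fst_ne_zero_of_not_isSquare (hdisc i ▸ hDns)) k

lemma summable_norm_coeffs_comp_zpow (hf : Function.Injective f) (hdisc : ∀ i, disc (f i) = D)
    (hDns : ¬ IsSquare D) (hk : 2 < k) :
    Summable fun i => ‖coeffs (f i)‖ ^ (-(k : ℤ)) :=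
  (summable_norm_zpow_neg hk).comp_injective (injective_coeffs_comp hf hdisc hDns)

lemma summable_norm_eval_comp_zpow (hf : Function.Injective f) (hdisc : ∀ i, disc (f i) = D)
    (hD : 0 < D) (hDns : ¬ IsSquare D) (hk : 2 < k) (hz : 0 < z.im) :
    Summable fun i => ‖eval (f i) z‖ ^ (-(k : ℤ)) :=
  ((summable_norm_coeffs_comp_zpow hf hdisc hDns hk).mul_left _).of_nonneg_of_le
    (fun _ => by positivity) (norm_eval_comp_zpow_le hdisc hD hDns (boundConst_pos hz) le_rfl hz k)

lemma tsum_norm_eval_comp_zpow_le (hf : Function.Injective f) (hdisc : ∀ i, disc (f i) = D)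
    (hD : 0 < D) (hDns : ¬ IsSquare D) (hk : 2 < k) {m : ℝ} (hm : 0 < m)
    (hmz : m ≤ boundConst z) (hz : 0 < z.im) :
    ∑' i, ‖eval (f i) z‖ ^ (-(k : ℤ)) ≤ m ^ (-(k : ℤ)) * ∑' x : Fin 2 → ℤ, ‖x‖ ^ (-(k : ℤ)) := by
  have hsum := summable_norm_coeffs_comp_zpow hf hdisc hDns hk
  calc ∑' i, ‖eval (f i) z‖ ^ (-(k : ℤ))
      ≤ ∑' i, m ^ (-(k : ℤ)) * ‖coeffs (f i)‖ ^ (-(k : ℤ)) :=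
        Summable.tsum_le_tsum (norm_eval_comp_zpow_le hdisc hD hDns hm hmz hz k)
          (summable_norm_eval_comp_zpow hf hdisc hD hDns hk hz) (hsum.mul_left _)
    _ ≤ m ^ (-(k : ℤ)) * ∑' x : Fin 2 → ℤ, ‖x‖ ^ (-(k : ℤ)) := by
      rw [tsum_mul_left]
      gcongr
      exact Summable.tsum_le_tsum_of_inj _ (injective_coeffs_comp hf hdisc hDns)
        (fun _ _ => by positivity) (fun _ => le_rfl) hsum (summable_norm_zpow_neg hk)

lemma tendstoLocallyUniformlyOn_tsum_of_norm_le (hf : Function.Injective f)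
    (hdisc : ∀ i, disc (f i) = D) (hD : 0 < D) (hDns : ¬ IsSquare D) (hk : 2 < k)
    {F : ι → ℂ → ℂ} (hF : ∀ i z, ‖F i z‖ ≤ ‖eval (f i) z‖ ^ (-(k : ℤ))) :
    TendstoLocallyUniformlyOn (fun T z => ∑ i ∈ T, F i z) (fun z => ∑' i, F i z)
      atTop {z : ℂ | 0 < z.im} := by
  rw [tendstoLocallyUniformlyOn_iff_forall_isCompact (isOpen_lt continuous_const continuous_im)]
  intro K hKH hK
  have hcont : ContinuousOn boundConst K :=
    ContinuousOn.div (by fun_prop) (by fun_prop) fun z hz => by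
      have : 0 < z.im := hKH hz
      positivity
  obtain ⟨m, hm, hmK⟩ := hK.exists_forall_le' hcont fun z hz => boundConst_pos (hKH hz)
  exact tendstoUniformlyOn_tsum ((summable_norm_coeffs_comp_zpow hf hdisc hDns hk).mul_left _)
    fun i z hz => (hF i z).trans (norm_eval_comp_zpow_le hdisc hD hDns hm (hmK z hz) (hKH hz) k i)

section Roots

variable {K : Type*} [Field K] [CharZero K]

/-- For `t ^ 2 = disc v`, `root t v` and `root (-t) v` are the roots `ρ₁`, `ρ₂` of `v(z, 1)`. -/
noncomputable def root (t : K) (v : ℤ × ℤ × ℤ) : K := (((-v.2.1 : ℤ) : K) + t) / (2 * (v.1 : K))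

lemma root_act_mul {t : K} (ht : t ^ 2 = (disc v : K)) (hdet : a * d - b * c = 1)
    (hv : v.1 ≠ 0) (hv' : (act a b c d v).1 ≠ 0) :
    root t (act a b c d v) * (a - c * root t v) = d * root t v - b := by
  have hdet' : (a * d - b * c : K) = 1 := by exact_mod_cast hdet
  have hA : (v.1 : K) ≠ 0 := by exact_mod_cast hv
  have hA' : ((act a b c d v).1 : K) ≠ 0 := by exact_mod_cast hv'
  unfold root
  field_simp
  obtain ⟨A, B, C⟩ := v
  simp only [disc] at ht
  simp only [act]
  push_cast at ht ⊢
  linear_combination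
    (-c : K) * ht + (-c * B * t + c * B ^ 2 - 4 * c * A * C - 2 * a * A * t) * hdet'

end Roots

end BinaryForm

namespace Padic

variable {p : ℕ} [Fact p.Prime] {a b c d : ℤ}

/-- `h` says that `ρ'` is the image of `ρ` under the Möbius transformation of
`[[d, -b], [-c, a]] ∈ Γ₀(p)`, written without a denominator that could vanish; such maps preserve
`ℤ_p` and its complement. -/
lemma norm_le_one_iff_of_mul_sub_eq (hdet : a * d - b * c = 1) (hc : (p : ℤ) ∣ c)
    {ρ ρ' : ℚ_[p]} (h : ρ' * (a - c * ρ) = d * ρ - b) : ‖ρ'‖ ≤ 1 ↔ ‖ρ‖ ≤ 1 := by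
  have ha : ‖(a : ℚ_[p])‖ = 1 :=
    norm_intCast_eq_one_iff.mpr (isCoprime_of_mul_sub_mul_eq_one hdet hc)
  have hd : ‖(d : ℚ_[p])‖ = 1 := norm_intCast_eq_one_iff.mpr
    (isCoprime_of_mul_sub_mul_eq_one (a := d) (b := b) (d := a) (by linear_combination hdet) hc)
  have hc' : ‖(c : ℚ_[p])‖ < 1 := norm_intCast_lt_one_iff.mpr hc
  have hb : ‖(b : ℚ_[p])‖ ≤ 1 := norm_int_le_one b
  have hn := congrArg norm h
  simp only [norm_mul, sub_eq_add_neg] at hn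
  constructor
  · contrapose!
    intro hρ
    have hdρ : ‖(d : ℚ_[p]) * ρ‖ = ‖ρ‖ := by rw [norm_mul, hd, one_mul]
    have hnum : ‖(d : ℚ_[p]) * ρ + -b‖ = ‖ρ‖ := by
      rw [IsUltrametricDist.norm_add_eq_max_of_norm_ne_norm, hdρ, norm_neg,
        max_eq_left (hb.trans hρ.le)]
      rw [hdρ, norm_neg]
      exact (hb.trans_lt hρ).ne'
    have hden : ‖(a : ℚ_[p]) + -(c * ρ)‖ < ‖ρ‖ := by
      refine (IsUltrametricDist.norm_add_le_max _ _).trans_lt (max_lt (by rwa [ha]) ?_)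
      rw [norm_neg, norm_mul]
      exact mul_lt_of_lt_one_left (by linarith) hc'
    rw [hnum] at hn
    by_contra! h1
    nlinarith [norm_nonneg ρ', norm_nonneg ((a : ℚ_[p]) + -(c * ρ))]
  · intro hρ
    have hden : ‖(a : ℚ_[p]) + -(c * ρ)‖ = 1 := by
      have : ‖-((c : ℚ_[p]) * ρ)‖ < 1 := by
        rw [norm_neg, norm_mul]
        exact (mul_le_of_le_one_right (norm_nonneg _) hρ).trans_lt hc'
      rw [IsUltrametricDist.norm_add_eq_max_of_norm_ne_norm (by rw [ha]; exact this.ne'), ha,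
        max_eq_left this.le]
    have hnum : ‖(d : ℚ_[p]) * ρ + -b‖ ≤ 1 := by
      refine (IsUltrametricDist.norm_add_le_max _ _).trans (max_le ?_ (by rwa [norm_neg]))
      rw [norm_mul, hd, one_mul]
      exact hρ
    rw [hden, mul_one] at hn
    rwa [hn]

end Padic

namespace BinaryForm

variable {p : ℕ} [Fact p.Prime] {a b c d : ℤ} {v : ℤ × ℤ × ℤ}

lemma norm_root_act_le_one_iff (hdisc : ¬ IsSquare (disc v)) {t : ℚ_[p]}
    (ht : t ^ 2 = (disc v : ℚ_[p])) (hdet : a * d - b * c = 1) (hc : (p : ℤ) ∣ c) :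
    ‖root t (act a b c d v)‖ ≤ 1 ↔ ‖root t v‖ ≤ 1 := by
  have hdisc' : ¬ IsSquare (disc (act a b c d v)) := by rwa [disc_act_of_det hdet]
  exact Padic.norm_le_one_iff_of_mul_sub_eq hdet hc (root_act_mul ht hdet
    (fst_ne_zero_of_not_isSquare hdisc) (fst_ne_zero_of_not_isSquare hdisc'))

end BinaryForm

open BinaryForm in
lemma gQe0_eq_ite {p : ℕ} [Fact p.Prime] (sq : ℚ_[p]) (v : ℤ × ℤ × ℤ) :
    gQe0 p sq v = if ‖root sq v‖ ≤ 1 ∧ ¬ ‖root (-sq) v‖ ≤ 1 then 1 else -1 := by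
  simp only [gQe0, root, Padic.norm_le_one_iff_val_nonneg, sub_eq_add_neg, not_le]
  exact if_congr (and_congr_right fun _ => by omega) rfl rfl

lemma norm_gQe0 {p : ℕ} [Fact p.Prime] (sq : ℚ_[p]) (v : ℤ × ℤ × ℤ) :
    ‖(gQe0 p sq v : ℂ)‖ = 1 := by
  rw [gQe0]
  split_ifs <;> simp

open BinaryForm in
lemma gQe0_act {p : ℕ} [Fact p.Prime] {a b c d : ℤ} {sq : ℚ_[p]} {v : ℤ × ℤ × ℤ}
    (hdisc : ¬ IsSquare (disc v)) (hsq : sq ^ 2 = (disc v : ℚ_[p])) (hdet : a * d - b * c = 1)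
    (hc : (p : ℤ) ∣ c) : gQe0 p sq (act a b c d v) = gQe0 p sq v := by
  simp only [gQe0_eq_ite, norm_root_act_le_one_iff hdisc hsq hdet hc,
    norm_root_act_le_one_iff hdisc (by rwa [neg_sq]) hdet hc]

namespace HeegnerForm

open BinaryForm

variable {p : ℕ} {D : ℤ} {a b c d : ℤ} {k : ℕ}

lemma disc_eq (Q : HeegnerForm p D) : disc Q.1 = D := Q.2.1

def gamma0Equiv (hdet : a * d - b * c = 1) (hc : (p : ℤ) ∣ c) :
    HeegnerForm p D ≃ HeegnerForm p D :=
  (actEquiv hdet).subtypeEquiv fun v => by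
    change disc v = D ∧ _ ↔ disc (act a b c d v) = D ∧ (p : ℤ) ∣ (act a b c d v).1
    rw [disc_act_of_det hdet, dvd_act_fst_iff hdet hc]

lemma gamma0Equiv_apply_coe (hdet : a * d - b * c = 1) (hc : (p : ℤ) ∣ c) (Q : HeegnerForm p D) :
    (gamma0Equiv hdet hc Q).1 = act a b c d Q.1 := rfl

lemma injective_act_coe (hdet : a * d - b * c = 1) :
    Function.Injective fun Q : HeegnerForm p D => act a b c d Q.1 :=
  (act_injective hdet).comp Subtype.val_injective

lemma disc_act_coe (hdet : a * d - b * c = 1) (Q : HeegnerForm p D) :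
    disc (act a b c d Q.1) = D := by
  rw [disc_act_of_det hdet, Q.disc_eq]

lemma tsum_norm_eval_act_zpow_le (hD : 0 < D) (hDns : ¬ IsSquare D) (hk : 2 < k)
    (hdet : a * d - b * c = 1) {z : ℂ} (hz : 1 ≤ z.im) :
    ∑' Q : HeegnerForm p D, ‖eval (act a b c d Q.1) z‖ ^ (-(k : ℤ)) ≤
      (z.im / 4) ^ (-(k : ℤ)) * ∑' x : Fin 2 → ℤ, ‖x‖ ^ (-(k : ℤ)) := by
  -- translate `z` into the strip `0 ≤ re < 1`, where `boundConst` is at least `im z / 4`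
  set n := ⌊z.re⌋
  have hshift (Q : HeegnerForm p D) :
      eval (act a b c d Q.1) z = eval (act 1 n 0 1 (act a b c d Q.1)) (z - n) := by
    rw [eval_act_translate, sub_add_cancel]
  have hbound : z.im / 4 ≤ boundConst (z - n) := by
    have hre : |(z - n).re| ≤ 1 := by
      rw [show (z - n).re = Int.fract z.re by rw [sub_re, intCast_re, Int.self_sub_floor],
        abs_of_nonneg (Int.fract_nonneg _)]
      exact (Int.fract_lt_one _).le
    simp only [boundConst, sub_im, intCast_im, sub_zero]
    rw [le_div_iff₀ (by positivity)]
    nlinarith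
  simp_rw [hshift]
  have htr : 1 * 1 - n * 0 = 1 := by ring
  refine tsum_norm_eval_comp_zpow_le ((act_injective htr).comp (injective_act_coe hdet))
    (fun Q => ?_) hD hDns hk (by positivity) hbound (by simpa using zero_lt_one.trans_le hz)
  rw [Function.comp_apply, disc_act_of_det htr, disc_act_coe hdet]

open UpperHalfPlane ModularForm ModularGroup
open scoped MatrixGroups Manifold

variable [Fact p.Prime] {sq : ℚ_[p]} {z : ℂ}

lemma heegTerm_eq (Q : HeegnerForm p D) (z : ℂ) :
    heegTerm p D sq k Q z = gQe0 p sq Q.1 * eval Q.1 z ^ (-(k : ℤ)) := rfl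

lemma norm_heegTerm (Q : HeegnerForm p D) (z : ℂ) :
    ‖heegTerm p D sq k Q z‖ = ‖eval Q.1 z‖ ^ (-(k : ℤ)) := by
  rw [heegTerm_eq, norm_mul, norm_gQe0, one_mul, norm_zpow]

lemma heegTerm_moebius (hDns : ¬ IsSquare D) (hsq : sq ^ 2 = (D : ℚ_[p]))
    (hdet : a * d - b * c = 1) (hc : (p : ℤ) ∣ c) (hz : z.im ≠ 0) (Q : HeegnerForm p D) :
    heegTerm p D sq k Q ((a * z + b) / (c * z + d)) =
      ((c : ℂ) * z + d) ^ (2 * k : ℤ) * heegTerm p D sq k (gamma0Equiv hdet hc Q) z := by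
  rw [heegTerm_eq, heegTerm_eq, gamma0Equiv_apply_coe,
    eval_moebius_zpow (mul_add_ne_zero_of_det hdet hz), mul_left_comm,
    gQe0_act (by rwa [Q.disc_eq]) (by rwa [Q.disc_eq]) hdet hc]

lemma tsum_heegTerm_moebius (hDns : ¬ IsSquare D) (hsq : sq ^ 2 = (D : ℚ_[p]))
    (hdet : a * d - b * c = 1) (hc : (p : ℤ) ∣ c) (hz : z.im ≠ 0) :
    ∑' Q : HeegnerForm p D, heegTerm p D sq k Q ((a * z + b) / (c * z + d)) =
      ((c : ℂ) * z + d) ^ (2 * k : ℤ) * ∑' Q : HeegnerForm p D, heegTerm p D sq k Q z := by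
  simp_rw [heegTerm_moebius hDns hsq hdet hc hz, tsum_mul_left]
  rw [(gamma0Equiv hdet hc).tsum_eq (heegTerm p D sq k · z)]

lemma summable_norm_heegTerm (hD : 0 < D) (hDns : ¬ IsSquare D) (hk : 2 < k) (hz : 0 < z.im) :
    Summable fun Q : HeegnerForm p D => ‖heegTerm p D sq k Q z‖ :=
  (summable_norm_eval_comp_zpow (f := fun Q : HeegnerForm p D => Q.1) Subtype.val_injective
    disc_eq hD hDns hk hz).congr fun Q => (norm_heegTerm Q z).symm

lemma tendstoLocallyUniformlyOn_heegTerm (hD : 0 < D) (hDns : ¬ IsSquare D) (hk : 2 < k) :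
    TendstoLocallyUniformlyOn (fun T z => ∑ Q ∈ T, heegTerm p D sq k Q z)
      (fun z => ∑' Q : HeegnerForm p D, heegTerm p D sq k Q z) atTop {z : ℂ | 0 < z.im} :=
  tendstoLocallyUniformlyOn_tsum_of_norm_le Subtype.val_injective disc_eq hD hDns hk
    fun Q z => (norm_heegTerm Q z).le

noncomputable def series (p : ℕ) [Fact p.Prime] (D : ℤ) (sq : ℚ_[p]) (k : ℕ) : ℍ → ℂ :=
  fun τ => ∑' Q : HeegnerForm p D, heegTerm p D sq k Q τ

lemma series_slash (hDns : ¬ IsSquare D) (hsq : sq ^ 2 = (D : ℚ_[p])) {γ : SL(2, ℤ)}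
    (hγ : γ ∈ CongruenceSubgroup.Gamma0 p) :
    series p D sq k ∣[(2 * k : ℤ)] γ = series p D sq k := by
  have hc : (p : ℤ) ∣ γ 1 0 :=
    (ZMod.intCast_zmod_eq_zero_iff_dvd _ _).mp (CongruenceSubgroup.Gamma0_mem.mp hγ)
  funext τ
  rw [slash_action_eq'_iff]
  simp only [series, coe_smul_eq_div]
  exact tsum_heegTerm_moebius hDns hsq (entries_det_eq_one γ) hc τ.im_ne_zero

lemma series_slash_apply (γ : SL(2, ℤ)) (τ : ℍ) :
    (series p D sq k ∣[(2 * k : ℤ)] γ) τ = ∑' Q : HeegnerForm p D,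
      gQe0 p sq Q.1 * eval (act (γ 0 0) (γ 0 1) (γ 1 0) (γ 1 1) Q.1) τ ^ (-(k : ℤ)) := by
  have hcd := mul_add_ne_zero_of_det (entries_det_eq_one γ) τ.im_ne_zero
  rw [SL_slash_apply, ModularGroup.denom_apply, series, coe_smul_eq_div, ← tsum_mul_right]
  refine tsum_congr fun Q => ?_
  rw [heegTerm_eq, eval_moebius_zpow hcd, mul_assoc, mul_right_comm, ← zpow_add₀ hcd]
  simp

lemma norm_series_slash_le (hD : 0 < D) (hDns : ¬ IsSquare D) (hk : 2 < k) (γ : SL(2, ℤ))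
    (τ : ℍ) : ‖(series p D sq k ∣[(2 * k : ℤ)] γ) τ‖ ≤ ∑' Q : HeegnerForm p D,
      ‖eval (act (γ 0 0) (γ 0 1) (γ 1 0) (γ 1 1) Q.1) τ‖ ^ (-(k : ℤ)) := by
  have hdet := entries_det_eq_one γ
  have hnorm (Q : HeegnerForm p D) :
      ‖(gQe0 p sq Q.1 : ℂ) * eval (act (γ 0 0) (γ 0 1) (γ 1 0) (γ 1 1) Q.1) τ ^ (-(k : ℤ))‖ =
        ‖eval (act (γ 0 0) (γ 0 1) (γ 1 0) (γ 1 1) Q.1) τ‖ ^ (-(k : ℤ)) := by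
    rw [norm_mul, norm_gQe0, one_mul, norm_zpow]
  rw [series_slash_apply]
  refine (norm_tsum_le_tsum_norm ?_).trans (tsum_congr hnorm).le
  exact (summable_norm_eval_comp_zpow (injective_act_coe hdet) (disc_act_coe hdet) hD hDns hk
    τ.im_pos).congr fun Q => (hnorm Q).symm

lemma isZeroAtImInfty_series_slash (hD : 0 < D) (hDns : ¬ IsSquare D) (hk : 2 < k)
    (γ : SL(2, ℤ)) : IsZeroAtImInfty (series p D sq k ∣[(2 * k : ℤ)] γ) := by
  have him : Tendsto (fun τ : ℍ => τ.im / 4) atImInfty atTop :=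
    tendsto_comap.atTop_div_const (by norm_num)
  have hlim := ((tendsto_zpow_atTop_zero (by omega : -(k : ℤ) < 0)).comp him).mul_const
    (∑' x : Fin 2 → ℤ, ‖x‖ ^ (-(k : ℤ)))
  rw [zero_mul] at hlim
  refine squeeze_zero_norm' ?_ hlim
  filter_upwards [(atImInfty_mem _).mpr ⟨1, fun τ hτ => hτ⟩] with τ hτ
  exact (norm_series_slash_le hD hDns hk γ τ).trans
    (tsum_norm_eval_act_zpow_le hD hDns hk (entries_det_eq_one γ) hτ)

lemma mdifferentiable_series (hD : 0 < D) (hDns : ¬ IsSquare D) (hk : 2 < k) :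
    MDiff (series p D sq k) := by
  rw [mdifferentiable_iff]
  refine DifferentiableOn.congr (f := fun z => ∑' Q : HeegnerForm p D, heegTerm p D sq k Q z) ?_
    fun z hz => by simp [series, ofComplex_apply_of_im_pos hz]
  refine (tendstoLocallyUniformlyOn_heegTerm hD hDns hk).differentiableOn
    (Eventually.of_forall fun T => DifferentiableOn.fun_sum fun Q _ => ?_)
    (isOpen_lt continuous_const continuous_im)
  exact ((by unfold eval; fun_prop : Differentiable ℂ (eval Q.1)).differentiableOn.zpow
    (.inl fun z hz => eval_ne_zero (Q.disc_eq.symm ▸ hD) hz)).const_mul _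

noncomputable def cuspForm (hD : 0 < D) (hDns : ¬ IsSquare D) (hsq : sq ^ 2 = (D : ℚ_[p]))
    (hk : 2 < k) : CuspForm (CongruenceSubgroup.Gamma0 p) (2 * k) where
  toFun := series p D sq k
  slash_action_eq' γ hγ := by
    obtain ⟨g, hg, rfl⟩ := Subgroup.mem_map.mp hγ
    exact series_slash hDns hsq hg
  holo' := mdifferentiable_series hD hDns hk
  zero_at_cusps' hc := by
    have : NeZero p := ⟨(Fact.out : p.Prime).ne_zero⟩
    rw [Subgroup.IsArithmetic.isCusp_iff_isCusp_SL2Z] at hc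
    exact (OnePoint.isZeroAt_iff_forall_SL2Z hc).mpr
      fun γ _ => isZeroAtImInfty_series_slash hD hDns hk γ

end HeegnerForm

open BinaryForm HeegnerForm in
theorem stmt13_general (p : ℕ) [Fact p.Prime]
    (k : ℕ) (hk : 3 ≤ k)
    (D : ℤ) (hD : 0 < D) (hDns : ¬ IsSquare D)
    (sq : ℚ_[p]) (hsq : sq ^ 2 = (D : ℚ_[p])) :
    (∀ z : ℂ, 0 < z.im → Summable fun Q : HeegnerForm p D => ‖heegTerm p D sq k Q z‖) ∧
    TendstoLocallyUniformlyOn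
      (fun (T : Finset (HeegnerForm p D)) (z : ℂ) => ∑ Q ∈ T, heegTerm p D sq k Q z)
      (fun z : ℂ => ∑' Q : HeegnerForm p D, heegTerm p D sq k Q z)
      atTop {z : ℂ | 0 < z.im} ∧
    (∃ f : CuspForm (CongruenceSubgroup.Gamma0 p) (2 * k),
      ∀ τ : UpperHalfPlane, f τ = ∑' Q : HeegnerForm p D, heegTerm p D sq k Q (τ : ℂ)) ∧
    (∀ a b c d : ℤ, a * d - b * c = 1 → (p : ℤ) ∣ c → ∀ z : ℂ, 0 < z.im →
      ((c : ℂ) * z + (d : ℂ)) ^ (-(2 * k : ℤ)) *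
          ∑' Q : HeegnerForm p D,
            heegTerm p D sq k Q (((a : ℂ) * z + (b : ℂ)) / ((c : ℂ) * z + (d : ℂ))) =
        ∑' Q : HeegnerForm p D, heegTerm p D sq k Q z) := by
  have hk' : 2 < k := hk
  refine ⟨fun z hz => summable_norm_heegTerm hD hDns hk' hz,
    tendstoLocallyUniformlyOn_heegTerm hD hDns hk', ⟨cuspForm hD hDns hsq hk', fun τ => rfl⟩,
    fun a b c d hdet hc z hz => ?_⟩
  rw [tsum_heegTerm_moebius hDns hsq hdet hc hz.ne', ← mul_assoc,
    ← zpow_add₀ (mul_add_ne_zero_of_det hdet hz.ne'), neg_add_cancel, zpow_zero, one_mul]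

/-- Let `p` be an odd prime, `k ≥ 3` odd, `D > 0` a nonsquare integer
which is a nonzero square mod `p`, and fix `√D ∈ ℚ_p`.  Then the series
`f_{k,D}^{(p)}(z) = Σ_Q (γ_Q·e₀)·Q(z,1)^{−k}` over Heegner forms of discriminant `D`
converges absolutely and locally uniformly on the upper half-plane, and defines a cusp
form of weight `2k` for `Γ₀(p)`; in particular it satisfies the weight `2k`
transformation law under `Γ₀(p)`. -/
theorem stmt13 (p : ℕ) [Fact p.Prime] (hp : p ≠ 2)
    (k : ℕ) (hk : 3 ≤ k) (hkodd : Odd k)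
    (D : ℤ) (hD : 0 < D) (hDns : ¬ IsSquare D)
    (hDp : IsSquare (D : ZMod p) ∧ (D : ZMod p) ≠ 0)
    (sq : ℚ_[p]) (hsq : sq ^ 2 = (D : ℚ_[p])) :
    (∀ z : ℂ, 0 < z.im → Summable fun Q : HeegnerForm p D => ‖heegTerm p D sq k Q z‖) ∧
    TendstoLocallyUniformlyOn
      (fun (T : Finset (HeegnerForm p D)) (z : ℂ) => ∑ Q ∈ T, heegTerm p D sq k Q z)
      (fun z : ℂ => ∑' Q : HeegnerForm p D, heegTerm p D sq k Q z)
      atTop {z : ℂ | 0 < z.im} ∧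
    (∃ f : CuspForm (CongruenceSubgroup.Gamma0 p) (2 * k),
      ∀ τ : UpperHalfPlane, f τ = ∑' Q : HeegnerForm p D, heegTerm p D sq k Q (τ : ℂ)) ∧
    (∀ a b c d : ℤ, a * d - b * c = 1 → (p : ℤ) ∣ c → ∀ z : ℂ, 0 < z.im →
      ((c : ℂ) * z + (d : ℂ)) ^ (-(2 * k : ℤ)) *
          ∑' Q : HeegnerForm p D,
            heegTerm p D sq k Q (((a : ℂ) * z + (b : ℂ)) / ((c : ℂ) * z + (d : ℂ))) =
        ∑' Q : HeegnerForm p D, heegTerm p D sq k Q z) :=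
  stmt13_general p k hk D hD hDns sq hsq
end
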